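/- Let 𝒯 be a geodesic tube of direction β∨ with centerline ℒ, and let w be a hyperbolic element of the affine Weyl group W^aff. The following are equivalent: (1) w(𝒯)=𝒯; (2) ℒ ⊂ Min(w) and the translation vector v_w is parallel to β∨; (3) there exists a point y ∈ 𝒯 ∩ Min(w) contained in some alcove, and v_w is parallel to β∨. -/

import Mathlib

open scoped RealInnerProductSpace

noncomputable section

/-- The ambient Euclidean space of rank `m`.  Via the fixed `W`-invariant inner product we
identify the space `V` containing the root system with its dual `V*`; the affine space `A`
underlying `V*` is then the Euclidean space itself. -/
abbrev E (m : ℕ) := EuclideanSpace ℝ (Fin m)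

variable {m : ℕ}

/-- The coroot `α∨ = 2α/(α,α)` of a vector `α` (under the identification of `V` with `V*`
given by the invariant inner product). -/
def coroot (α : E m) : E m := (2 / ⟪α, α⟫) • α

/-- The affine reflection `s_{α,k}(x) = x - (⟨α,x⟩ - k) α∨` as a function. -/
def affReflFun (α : E m) (k : ℤ) : E m → E m := fun x => x - (⟪α, x⟫ - (k : ℝ)) • coroot α

lemma affReflFun_involutive (α : E m) (k : ℤ) : Function.Involutive (affReflFun α k) := by
  intro x
  by_cases h : α = 0
  · simp [affReflFun, coroot, h]
  · have hαα : ⟪α, α⟫ ≠ (0:ℝ) := (inner_self_ne_zero (𝕜 := ℝ)).mpr h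
    have h2 : ⟪α, coroot α⟫ = (2:ℝ) := by
      unfold coroot
      rw [real_inner_smul_right, div_mul_cancel₀ _ hαα]
    have key : ∀ y : E m, ∀ s : ℝ, ⟪α, y - s • coroot α⟫ = ⟪α, y⟫ - 2 * s := by
      intro y s
      rw [inner_sub_right, real_inner_smul_right, h2]
      ring
    show affReflFun α k (x - (⟪α, x⟫ - (k:ℝ)) • coroot α) = x
    unfold affReflFun
    rw [key]
    rw [sub_sub, ← add_smul]
    rw [show (⟪α, x⟫ - (k:ℝ)) + (⟪α, x⟫ - 2 * (⟪α, x⟫ - (k:ℝ)) - (k:ℝ)) = 0 by ring]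
    simp

/-- The affine reflection `s_{α,k}` as a permutation of the affine space. -/
def affRefl (α : E m) (k : ℤ) : Equiv.Perm (E m) := (affReflFun_involutive α k).toPerm

/-- The affine Weyl group of a set of roots `Φ`: the group generated by all affine
reflections `s_{α,k}`, `α ∈ Φ`, `k ∈ ℤ`. -/
def Waff (Φ : Set (E m)) : Subgroup (Equiv.Perm (E m)) :=
  Subgroup.closure {w | ∃ α ∈ Φ, ∃ k : ℤ, w = affRefl α k}

/-- `Φ` is a reduced (crystallographic) root system spanning the ambient space. -/
structure IsRootSystem (Φ : Set (E m)) : Prop where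
  finite : Φ.Finite
  ne_zero : ∀ α ∈ Φ, α ≠ (0 : E m)
  span_eq_top : Submodule.span ℝ Φ = ⊤
  reflect_mem : ∀ α ∈ Φ, ∀ β ∈ Φ, β - ⟪α, β⟫ • coroot α ∈ Φ
  crystallographic : ∀ α ∈ Φ, ∀ β ∈ Φ, ∃ z : ℤ, ⟪α, coroot β⟫ = (z : ℝ)
  reduced : ∀ α ∈ Φ, ∀ t : ℝ, t • α ∈ Φ → t = 1 ∨ t = -1

/-- `B` is a system of simple roots of `Φ`. -/
structure IsSimpleSystem (Φ : Set (E m)) (B : Fin m → E m) : Prop where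
  mem : ∀ i, B i ∈ Φ
  indep : LinearIndependent ℝ B
  decomp : ∀ α ∈ Φ, (∃ c : Fin m → ℤ, α = ∑ j, (c j : ℝ) • B j ∧ ∀ j, 0 ≤ c j) ∨
                    (∃ c : Fin m → ℤ, α = ∑ j, (c j : ℝ) • B j ∧ ∀ j, c j ≤ 0)

/-- `ω` is the system of fundamental coweights relative to the simple roots `B`,
i.e. `⟨α_i, ω_j∨⟩ = δ_{ij}`. -/
def IsFundamentalCoweights (B ω : Fin m → E m) : Prop :=
  ∀ i j, ⟪B i, ω j⟫ = if i = j then (1 : ℝ) else 0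

/-- The wall `H_{α,k} = {x : ⟨α,x⟩ = k}`. -/
def wall (α : E m) (k : ℤ) : Set (E m) := {x | ⟪α, x⟫ = (k : ℝ)}

/-- The union of all walls of the root system `Φ`. -/
def allWalls (Φ : Set (E m)) : Set (E m) := ⋃ α ∈ Φ, ⋃ k : ℤ, wall α k

/-- An alcove: a connected component of the complement of the union of all walls. -/
def IsAlcove (Φ : Set (E m)) (C : Set (E m)) : Prop :=
  ∃ x ∈ (allWalls Φ)ᶜ, C = connectedComponentIn (allWalls Φ)ᶜ x

/-- The set `𝒲` of walls removed when forming geodesic tubes of direction `β∨`: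
all walls `H_{α,k}` with `⟨α, β∨⟩ = 0` (equivalently `α ∈ Φ_I`). -/
def tubeWalls (Φ : Set (E m)) (β : E m) : Set (E m) :=
  ⋃ α ∈ {α ∈ Φ | ⟪α, β⟫ = (0:ℝ)}, ⋃ k : ℤ, wall α k

/-- A geodesic tube of direction `β∨`: a connected component of `A ∖ ⋃𝒲`. -/
def IsGeodesicTube (Φ : Set (E m)) (β : E m) (T : Set (E m)) : Prop :=
  ∃ x ∈ (tubeWalls Φ β)ᶜ, T = connectedComponentIn (tubeWalls Φ β)ᶜ x

/-- `d_γ = inf_x d(x, γx)`. -/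
def minDisp (f : E m → E m) : ℝ := ⨅ x, dist x (f x)

/-- `Min(γ) = {x : d(x,γx) = d_γ}`. -/
def minSet (f : E m → E m) : Set (E m) := {x | dist x (f x) = minDisp f}

/-- A hyperbolic isometry: semisimple (`Min` nonempty) with `d_γ > 0`. -/
def IsHyperbolic (f : E m → E m) : Prop := (minSet f).Nonempty ∧ 0 < minDisp f

/-- `v` is the vector by which `γ` translates its min set. -/
def HasTransVec (f : E m → E m) (v : E m) : Prop := ∀ x ∈ minSet f, f x = x + v

/-- `x` is the barycenter of the polysimplex `s`: the average of the vertices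
(extreme points of the closure) of `s`. -/
def IsBarycenter (s : Set (E m)) (x : E m) : Prop :=
  ∃ F : Finset (E m), (F : Set (E m)) = Set.extremePoints ℝ (closure s) ∧ F.Nonempty ∧
    x = (F.card : ℝ)⁻¹ • ∑ y ∈ F, y

/-- The centerline `ℒ = x + ℝ β∨`. -/
def centerline (x β : E m) : Set (E m) := {p | ∃ t : ℝ, p = x + t • β}


/-!
Every element of `W^aff` is an affine isometry `x ↦ L x + b` with `L Φ = Φ` and `⟪γ, b⟫ ∈ ℤ` for
`γ ∈ Φ`. The tube through `x₀` is the open box cut out by the strips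
`⌊⟪α, x₀⟫⌋ < ⟪α, ·⟫ < ⌊⟪α, x₀⟫⌋ + 1`, `α ∈ Φ_I`: it is invariant under translation by `β∨`, and its
slice by `A_I` is bounded, so the barycenter of that slice lies in the tube.

(1 ⇒ 2) Orbits of `w` stay at bounded distance from the axis `p + ℕ v_w` and, inside `𝒯`, have
bounded pairing with every `α ∈ Φ_I`; hence `v_w ⊥ Φ_I`, i.e. `v_w ∈ ℝ β∨`, and `L` fixes `β∨`.
Then `w` followed by a translation along `β∨` is an affine isometry preserving the slice, so it
fixes the barycenter `x`: `w` translates the centerline along `β∨`. Since `⟪β∨, w y - y⟫` does not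
depend on `y`, Cauchy–Schwarz makes such a displacement minimal.
(2 ⇒ 3) A generic point of the centerline lies on no wall.
(3 ⇒ 1) As `L` fixes `β∨`, `w` permutes the walls in `𝒲`, hence the components of their
complement, and `w y = y + v_w` lies in the same component as `y`.
-/

lemma IsPreconnected.subset_Ioo_floor {S : Set ℝ} (hS : IsPreconnected S) {a : ℝ} (ha : a ∈ S)
    (hZ : ∀ k : ℤ, (k : ℝ) ∉ S) : S ⊆ Set.Ioo (⌊a⌋ : ℝ) (⌊a⌋ + 1) := by
  intro y hy
  by_contra hy'
  rcases not_and_or.mp hy' with hlow | hhigh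
  · exact hZ ⌊a⌋ (hS.ordConnected.out hy ha ⟨not_lt.mp hlow, Int.floor_le a⟩)
  · refine hZ (⌊a⌋ + 1) (hS.ordConnected.out ha hy ⟨?_, ?_⟩) <;> push_cast
    exacts [(Int.lt_floor_add_one a).le, not_lt.mp hhigh]

lemma eq_zero_of_forall_abs_nat_mul_le {c C : ℝ} (h : ∀ n : ℕ, |n * c| ≤ C) : c = 0 := by
  by_contra hc
  obtain ⟨n, hn⟩ := exists_nat_gt (C / |c|)
  rw [div_lt_iff₀ (abs_pos.mpr hc)] at hn
  have := h n
  rw [abs_mul, Nat.abs_cast] at this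
  linarith

lemma Isometry.iterate {X : Type*} [PseudoEMetricSpace X] {f : X → X} (hf : Isometry f)
    (n : ℕ) : Isometry f^[n] := by
  induction n with
  | zero => exact isometry_id
  | succ n ih => exact ih.comp hf

lemma AffineEquiv.image_extremePoints {𝕜 F G : Type*} [Ring 𝕜] [PartialOrder 𝕜]
    [IsOrderedRing 𝕜] [AddCommGroup F] [Module 𝕜 F] [AddCommGroup G] [Module 𝕜 G]
    (f : F ≃ᵃ[𝕜] G) (s : Set F) :
    f '' Set.extremePoints 𝕜 s = Set.extremePoints 𝕜 (f '' s) := by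
  ext b
  obtain ⟨a, rfl⟩ := f.surjective b
  have : ∀ x y, f '' openSegment 𝕜 x y = openSegment 𝕜 (f x) (f y) :=
    image_openSegment _ f.toAffineMap
  simp only [mem_extremePoints, f.surjective.forall, f.injective.mem_set_image,
    f.injective.eq_iff, ← this]

lemma AffineMap.apply_average {F : Type*} [AddCommGroup F] [Module ℝ F] (f : F →ᵃ[ℝ] F)
    {P : Finset F} (hP : P.Nonempty) :
    f ((P.card : ℝ)⁻¹ • ∑ y ∈ P, y) = (P.card : ℝ)⁻¹ • ∑ y ∈ P, f y := by
  have hcard : (P.card : ℝ) ≠ 0 := by exact_mod_cast hP.card_pos.ne'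
  rw [f.decomp]
  simp only [Pi.add_apply, map_smul, map_sum, Finset.sum_add_distrib,
    Finset.sum_const, smul_add, ← Nat.cast_smul_eq_nsmul ℝ, smul_smul, inv_mul_cancel₀ hcard,
    one_smul]

lemma apply_average_extremePoints_lt {F : Type*} [NormedAddCommGroup F] [NormedSpace ℝ F]
    {K : Set F} (hKc : IsCompact K) (hKconv : Convex ℝ K) {P : Finset F}
    (hP : (P : Set F) = Set.extremePoints ℝ K) (ℓ : F →L[ℝ] ℝ) {c : ℝ}
    (hle : ∀ y ∈ K, ℓ y ≤ c) (hlt : ∃ y ∈ K, ℓ y < c) :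
    ℓ ((P.card : ℝ)⁻¹ • ∑ y ∈ P, y) < c := by
  obtain ⟨e, he, hec⟩ : ∃ e ∈ P, ℓ e < c := by
    by_contra! h
    obtain ⟨y, hy, hyc⟩ := hlt
    have hK : K ⊆ {y | c ≤ ℓ y} := by
      rw [← closure_convexHull_extremePoints hKc hKconv, ← hP]
      exact closure_minimal (convexHull_min h (convex_halfSpace_ge ℓ.isLinear c))
        (isClosed_le continuous_const ℓ.continuous)
    exact (hK hy).not_gt hyc
  have hcard : (0 : ℝ) < P.card := by exact_mod_cast Finset.card_pos.mpr ⟨e, he⟩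
  have hPK : ∀ y ∈ P, y ∈ K := fun y hy =>
    extremePoints_subset (hP ▸ Finset.mem_coe.mpr hy : y ∈ Set.extremePoints ℝ K)
  have hsum : ∑ y ∈ P, ℓ y < P.card * c := by
    simpa using Finset.sum_lt_sum (fun y hy => hle y (hPK y hy)) ⟨e, he, hec⟩
  rw [map_smul, map_sum, smul_eq_mul, inv_mul_lt_iff₀ hcard]
  exact hsum

lemma isBounded_of_isBounded_image_inner {F ι : Type*} [NormedAddCommGroup F]
    [InnerProductSpace ℝ F] [FiniteDimensional ℝ F] [Fintype ι] {G : ι → F}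
    (hG : ∀ y, (∀ j, ⟪G j, y⟫ = 0) → y = 0) {S : Set F}
    (hS : ∀ j, Bornology.IsBounded ((fun y => ⟪G j, y⟫) '' S)) : Bornology.IsBounded S := by
  let Ψ : F →ₗ[ℝ] ι → ℝ := LinearMap.pi fun j => innerₛₗ ℝ (G j)
  obtain ⟨K, -, hK⟩ := Ψ.exists_antilipschitzWith
    (LinearMap.ker_eq_bot'.mpr fun y hy => hG y fun j => congrFun hy j)
  refine (hK.isBounded_preimage ?_).subset (Set.subset_preimage_image Ψ S)
  refine Bornology.forall_isBounded_image_eval_iff.mp fun j => ?_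
  rw [Set.image_image]
  exact hS j

lemma affReflFun_apply (α : E m) (k : ℤ) (x : E m) :
    affReflFun α k x = (ℝ ∙ α)ᗮ.reflection x + (k : ℝ) • coroot α := by
  simp only [Submodule.reflection_orthogonal_apply, Submodule.reflection_singleton_apply,
    RCLike.ofReal_real_eq_id, id_eq, ← real_inner_self_eq_norm_sq, affReflFun, coroot, smul_smul]
  module

-- Everything used about `W^aff`: its elements lie in this group, whose elements permute the walls.
def affineSymmetries (Φ : Set (E m)) : Subgroup (Equiv.Perm (E m)) where
  carrier := {w | ∃ (L : E m ≃ₗᵢ[ℝ] E m) (b : E m),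
    (∀ x, w x = L x + b) ∧ L '' Φ = Φ ∧ ∀ γ ∈ Φ, ∃ k : ℤ, ⟪γ, b⟫ = k}
  one_mem' := ⟨.refl ℝ _, 0, by simp, by simp, fun _ _ => ⟨0, by simp⟩⟩
  mul_mem' := by
    rintro w₁ w₂ ⟨L₁, b₁, hw₁, hΦ₁, hb₁⟩ ⟨L₂, b₂, hw₂, hΦ₂, hb₂⟩
    refine ⟨L₂.trans L₁, L₁ b₂ + b₁, fun x => ?_, ?_, fun γ hγ => ?_⟩
    · simp only [Equiv.Perm.mul_apply, hw₁, hw₂, LinearIsometryEquiv.trans_apply, map_add]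
      abel
    · rw [LinearIsometryEquiv.coe_trans, Set.image_comp, hΦ₂, hΦ₁]
    · obtain ⟨k₁, hk₁⟩ := hb₁ γ hγ
      obtain ⟨γ, hγ', rfl⟩ : γ ∈ L₁ '' Φ := by rwa [hΦ₁]
      obtain ⟨k₂, hk₂⟩ := hb₂ γ hγ'
      exact ⟨k₂ + k₁, by rw [inner_add_right, L₁.inner_map_map, hk₁, hk₂]; push_cast; rfl⟩
  inv_mem' := by
    rintro w ⟨L, b, hw, hΦ, hb⟩
    refine ⟨L.symm, -L.symm b, fun x => ?_, ?_, fun γ hγ => ?_⟩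
    · rw [Equiv.Perm.inv_def, Equiv.symm_apply_eq, hw, map_add, map_neg]
      simp
    · conv_lhs => rw [← hΦ]
      exact L.toEquiv.symm_image_image Φ
    · obtain ⟨k, hk⟩ := hb (L γ) (hΦ ▸ Set.mem_image_of_mem L hγ)
      exact ⟨-k, by rw [inner_neg_right, ← L.inner_map_eq_flip, hk]; push_cast; rfl⟩

lemma Waff_le_affineSymmetries {Φ : Set (E m)} (hΦ : IsRootSystem Φ) :
    Waff Φ ≤ affineSymmetries Φ := by
  refine (Subgroup.closure_le _).mpr ?_
  rintro _ ⟨α, hα, k, rfl⟩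
  set R := (ℝ ∙ α)ᗮ.reflection
  have hRΦ : Set.MapsTo R Φ Φ := fun γ hγ => by
    have h := affReflFun_apply α 0 γ
    simp only [affReflFun, Int.cast_zero, sub_zero, zero_smul, add_zero] at h
    exact h ▸ hΦ.reflect_mem α hα γ hγ
  refine ⟨R, (k : ℝ) • coroot α, affReflFun_apply α k, ?_, fun γ hγ => ?_⟩
  · refine hRΦ.image_subset.antisymm fun γ hγ => ⟨R γ, hRΦ hγ, ?_⟩
    exact Submodule.reflection_reflection _ γ
  · obtain ⟨z, hz⟩ := hΦ.crystallographic γ hγ α hα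
    exact ⟨k * z, by rw [real_inner_smul_right, hz]; push_cast; ring⟩

section MinSet

variable {f : E m → E m} {L : E m ≃ₗᵢ[ℝ] E m} {b v p x β : E m}

lemma minDisp_le (f : E m → E m) (y : E m) : minDisp f ≤ dist y (f y) :=
  ciInf_le ⟨0, by rintro _ ⟨z, rfl⟩; exact dist_nonneg⟩ y

lemma mem_minSet_of_le {y : E m} (h : ∀ z, dist y (f y) ≤ dist z (f z)) : y ∈ minSet f :=
  le_antisymm (le_ciInf h) (minDisp_le f y)

lemma isometry_of_eq_add (hf : ∀ x, f x = L x + b) : Isometry f :=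
  Isometry.of_dist_eq fun x y => by rw [hf, hf, dist_add_right, L.dist_map]

lemma Isometry.mapsTo_minSet (hf : Isometry f) : Set.MapsTo f (minSet f) (minSet f) :=
  fun y hy => (hf.dist_eq y (f y)).trans hy

lemma HasTransVec.iterate_apply (hf : Isometry f) (hv : HasTransVec f v) (hp : p ∈ minSet f)
    (n : ℕ) : f^[n] p = p + (n : ℝ) • v := by
  induction n with
  | zero => simp
  | succ n ih =>
    rw [Function.iterate_succ_apply', hv _ ((hf.mapsTo_minSet.iterate n) hp), ih]
    push_cast
    module

lemma HasTransVec.norm_eq_minDisp (hv : HasTransVec f v) (hp : p ∈ minSet f) :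
    ‖v‖ = minDisp f := by
  rw [← hp, hv p hp, dist_self_add_right]

lemma IsHyperbolic.transVec_ne_zero (hf : IsHyperbolic f) (hv : HasTransVec f v) : v ≠ 0 := by
  obtain ⟨⟨p, hp⟩, hpos⟩ := hf
  rw [← norm_pos_iff, hv.norm_eq_minDisp hp]
  exact hpos

lemma HasTransVec.linear_apply_eq (hf : ∀ x, f x = L x + b) (hv : HasTransVec f v)
    (hp : p ∈ minSet f) : L v = v := by
  have h := hv.iterate_apply (isometry_of_eq_add hf) hp 2
  simp only [Function.iterate_succ_apply, Function.iterate_zero_apply, hv p hp] at h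
  rw [hf, map_add, add_right_comm, ← hf, hv p hp] at h
  calc L v = (p + v + L v) - (p + v) := by abel
    _ = v := by rw [h]; module

lemma HasTransVec.inner_eq_zero_of_mapsTo (hf : Isometry f) (hv : HasTransVec f v)
    (hp : p ∈ minSet f) {S : Set (E m)} (hS : Set.MapsTo f S S) (hx : x ∈ S) {α : E m}
    (hα : Bornology.IsBounded ((fun y => ⟪α, y⟫) '' S)) : ⟪α, v⟫ = 0 := by
  obtain ⟨M, hM⟩ := isBounded_iff_forall_norm_le.mp hα
  -- the orbit of `x` stays within `dist p x` of the orbit `p + n • v` of `p`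
  refine eq_zero_of_forall_abs_nat_mul_le (C := ‖α‖ * dist p x + M + |⟪α, p⟫|) fun n => ?_
  have hsplit : (n : ℝ) * ⟪α, v⟫ = ⟪α, f^[n] p - f^[n] x⟫ + ⟪α, f^[n] x⟫ - ⟪α, p⟫ := by
    rw [hv.iterate_apply hf hp, inner_sub_right, inner_add_right, real_inner_smul_right]
    ring
  have h₁ : |⟪α, f^[n] p - f^[n] x⟫| ≤ ‖α‖ * dist p x := by
    rw [← (hf.iterate n).dist_eq p x, dist_eq_norm]
    exact abs_real_inner_le_norm _ _
  have h₂ : |⟪α, f^[n] x⟫| ≤ M := hM _ ⟨_, hS.iterate n hx, rfl⟩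
  rw [hsplit]
  calc _ ≤ |⟪α, f^[n] p - f^[n] x⟫ + ⟪α, f^[n] x⟫| + |⟪α, p⟫| := abs_sub _ _
    _ ≤ _ := by linarith [abs_add_le ⟪α, f^[n] p - f^[n] x⟫ ⟪α, f^[n] x⟫]

lemma inner_apply_sub_self (hf : ∀ x, f x = L x + b) (hLβ : L β = β) (y : E m) :
    ⟪β, f y - y⟫ = ⟪β, b⟫ := by
  rw [hf, add_sub_right_comm, inner_add_right, inner_sub_right]
  nth_rw 1 [← hLβ]
  rw [L.inner_map_map, sub_self, zero_add]

lemma mem_minSet_of_apply_eq_add_smul (hf : ∀ x, f x = L x + b) (hLβ : L β = β) {y : E m}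
    {c : ℝ} (hy : f y = y + c • β) : y ∈ minSet f := by
  refine mem_minSet_of_le fun z => ?_
  rcases eq_or_ne β 0 with rfl | hβ
  · simp [hy]
  have key : ‖β‖ * dist y (f y) ≤ ‖β‖ * dist z (f z) :=
    calc ‖β‖ * dist y (f y) = |⟪β, f y - y⟫| := by
          rw [hy, add_sub_cancel_left, real_inner_smul_right, real_inner_self_eq_norm_sq,
            dist_self_add_right, norm_smul, abs_mul, Real.norm_eq_abs, abs_pow, abs_norm]
          ring
      _ = |⟪β, f z - z⟫| := by rw [inner_apply_sub_self hf hLβ, inner_apply_sub_self hf hLβ]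
      _ ≤ ‖β‖ * dist z (f z) := by rw [dist_comm, dist_eq_norm]; exact abs_real_inner_le_norm _ _
  exact le_of_mul_le_mul_left key (norm_pos_iff.mpr hβ)

lemma centerline_subset_minSet (hf : ∀ x, f x = L x + b) (hLβ : L β = β) {x : E m} {c : ℝ}
    (hx : f x = x + c • β) : centerline x β ⊆ minSet f := by
  rintro _ ⟨t, rfl⟩
  refine mem_minSet_of_apply_eq_add_smul hf hLβ (c := c) ?_
  rw [hf, map_add, map_smul, hLβ, add_right_comm, ← hf, hx]
  abel

end MinSet

section Tube

variable {Φ : Set (E m)} {f : E m → E m} {L : E m ≃ₗᵢ[ℝ] E m} {b β x₀ : E m}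

lemma mem_tubeWalls_iff {y : E m} :
    y ∈ tubeWalls Φ β ↔ ∃ α ∈ Φ, ⟪α, β⟫ = 0 ∧ ∃ k : ℤ, ⟪α, y⟫ = k := by
  simp [tubeWalls, wall, and_assoc]

def tubeBox (Φ : Set (E m)) (β x₀ : E m) : Set (E m) :=
  {y | ∀ α ∈ Φ, ⟪α, β⟫ = 0 → ⟪α, y⟫ ∈ Set.Ioo (⌊⟪α, x₀⟫⌋ : ℝ) (⌊⟪α, x₀⟫⌋ + 1)}

lemma convex_tubeBox : Convex ℝ (tubeBox Φ β x₀) :=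
  fun y hy z hz a b ha hb hab α hα hαβ => by
    simpa only [inner_add_right, real_inner_smul_right, smul_eq_mul] using
      convex_Ioo _ _ (hy α hα hαβ) (hz α hα hαβ) ha hb hab

lemma add_smul_mem_tubeBox {y : E m} (hy : y ∈ tubeBox Φ β x₀) (t : ℝ) :
    y + t • β ∈ tubeBox Φ β x₀ := fun α hα hαβ => by
  simpa [inner_add_right, real_inner_smul_right, hαβ] using hy α hα hαβ

lemma tubeBox_subset_compl_tubeWalls : tubeBox Φ β x₀ ⊆ (tubeWalls Φ β)ᶜ := by
  rintro y hy hyW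
  obtain ⟨α, hα, hαβ, k, hk⟩ := mem_tubeWalls_iff.mp hyW
  have ⟨h₁, h₂⟩ := hk ▸ hy α hα hαβ
  have h₁' : ⌊⟪α, x₀⟫⌋ < k := by exact_mod_cast h₁
  have h₂' : k < ⌊⟪α, x₀⟫⌋ + 1 := by exact_mod_cast h₂
  omega

lemma connectedComponentIn_eq_tubeBox (hx₀ : x₀ ∈ (tubeWalls Φ β)ᶜ) :
    connectedComponentIn (tubeWalls Φ β)ᶜ x₀ = tubeBox Φ β x₀ := by
  set T := connectedComponentIn (tubeWalls Φ β)ᶜ x₀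
  have hx₀T : x₀ ∈ T := mem_connectedComponentIn hx₀
  refine subset_antisymm (fun y hy α hα hαβ => ?_) ?_
  · have hmaps : ∀ k : ℤ, (k : ℝ) ∉ (fun z => ⟪α, z⟫) '' T := by
      rintro k ⟨z, hz, hzk⟩
      exact connectedComponentIn_subset _ _ hz (mem_tubeWalls_iff.mpr ⟨α, hα, hαβ, k, hzk⟩)
    exact (isPreconnected_connectedComponentIn.image _ (by fun_prop)).subset_Ioo_floor
      (Set.mem_image_of_mem _ hx₀T) hmaps (Set.mem_image_of_mem _ hy)
  · refine convex_tubeBox.isPreconnected.subset_connectedComponentIn ?_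
      tubeBox_subset_compl_tubeWalls
    intro α hα hαβ
    refine ⟨(Int.floor_le _).lt_of_ne fun h => hx₀ ?_, Int.lt_floor_add_one _⟩
    exact mem_tubeWalls_iff.mpr ⟨α, hα, hαβ, _, h.symm⟩

lemma isBounded_image_inner_tubeBox {α : E m} (hα : α ∈ Φ) (hαβ : ⟪α, β⟫ = 0) :
    Bornology.IsBounded ((fun y => ⟪α, y⟫) '' tubeBox Φ β x₀) :=
  Metric.isBounded_Ioo (⌊⟪α, x₀⟫⌋ : ℝ) (⌊⟪α, x₀⟫⌋ + 1) |>.subset <| by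
    rintro _ ⟨y, hy, rfl⟩
    exact hy α hα hαβ

lemma preimage_tubeWalls (hf : ∀ x, f x = L x + b) (hLΦ : L '' Φ = Φ)
    (hb : ∀ γ ∈ Φ, ∃ k : ℤ, ⟪γ, b⟫ = k) (hLβ : L β = β) :
    f ⁻¹' tubeWalls Φ β = tubeWalls Φ β := by
  ext z
  simp only [Set.mem_preimage, mem_tubeWalls_iff]
  conv_lhs => rw [← hLΦ]
  rw [Set.exists_mem_image]
  refine exists_congr fun α => and_congr_right fun hα =>
    and_congr (by rw [← L.inner_map_map α β, hLβ]) ?_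
  obtain ⟨k₀, hk₀⟩ := hb (L α) (hLΦ ▸ Set.mem_image_of_mem L hα)
  rw [hf, inner_add_right, L.inner_map_map, hk₀]
  refine ⟨fun ⟨k, hk⟩ => ⟨k - k₀, by push_cast; linarith⟩,
    fun ⟨k, hk⟩ => ⟨k + k₀, by push_cast; linarith⟩⟩

lemma image_connectedComponentIn_compl_tubeWalls (hf : ∀ x, f x = L x + b)
    (hLΦ : L '' Φ = Φ) (hb : ∀ γ ∈ Φ, ∃ k : ℤ, ⟪γ, b⟫ = k) (hLβ : L β = β) {y : E m}
    (hy : y ∈ (tubeWalls Φ β)ᶜ) :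
    f '' connectedComponentIn (tubeWalls Φ β)ᶜ y = connectedComponentIn (tubeWalls Φ β)ᶜ (f y) := by
  let h : E m ≃ₜ E m := L.toHomeomorph.trans (Homeomorph.addRight b)
  have hh : ⇑h = f := funext fun x => (hf x).symm
  have hW : h '' (tubeWalls Φ β)ᶜ = (tubeWalls Φ β)ᶜ := by
    rw [Set.image_compl_eq h.bijective]
    conv_lhs => rw [← preimage_tubeWalls hf hLΦ hb hLβ, ← hh]
    rw [Set.image_preimage_eq _ h.surjective]
  rw [← hh, h.image_connectedComponentIn hy, hW]

lemma exists_add_smul_notMem_allWalls (hfin : Φ.Finite) {x : E m}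
    (hx : x ∈ (tubeWalls Φ β)ᶜ) : ∃ t : ℝ, x + t • β ∉ allWalls Φ := by
  let bad : Set ℝ := ⋃ α ∈ {α ∈ Φ | ⟪α, β⟫ ≠ 0}, ⋃ k : ℤ, {t | ⟪α, x + t • β⟫ = k}
  have hbad : bad.Countable := by
    refine (hfin.subset (Set.sep_subset _ _)).countable.biUnion fun α hα =>
      Set.countable_iUnion fun k => Set.Subsingleton.countable fun t₁ h₁ t₂ h₂ => ?_
    simp only [Set.mem_ofPred_eq, inner_add_right, real_inner_smul_right] at h₁ h₂
    exact mul_right_cancel₀ hα.2 (by linarith)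
  obtain ⟨t, ht⟩ : ∃ t, t ∉ bad := by
    by_contra! h
    exact Set.not_countable_univ (hbad.mono fun t _ => h t)
  refine ⟨t, fun hW => ?_⟩
  simp only [allWalls, wall, Set.mem_iUnion] at hW
  obtain ⟨α, hα, k, hk⟩ := hW
  by_cases hαβ : ⟪α, β⟫ = 0
  · refine hx (mem_tubeWalls_iff.mpr ⟨α, hα, hαβ, k, ?_⟩)
    simpa [inner_add_right, real_inner_smul_right, hαβ] using hk
  · exact ht (Set.mem_biUnion ⟨hα, hαβ⟩ (Set.mem_iUnion.mpr ⟨k, hk⟩))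

end Tube

section Barycenter

variable {Φ : Set (E m)} {B ω : Fin m → E m} {i : Fin m} {f : E m → E m} {L : E m ≃ₗᵢ[ℝ] E m}
  {b β x₀ x : E m}

lemma eq_inner_smul_coweight (hB : LinearIndependent ℝ B) (hω : IsFundamentalCoweights B ω)
    {u : E m} (hu : ∀ j ≠ i, ⟪B j, u⟫ = 0) :
    u = ⟪B i, u⟫ • ω i := by
  have : Nonempty (Fin m) := ⟨i⟩
  refine InnerProductSpace.ext_inner_left_basis
    (basisOfLinearIndependentOfCardEqFinrank hB (by simp)) fun j => ?_
  rw [coe_basisOfLinearIndependentOfCardEqFinrank, real_inner_smul_right, hω]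
  by_cases hj : j = i
  · simp [hj]
  · simp [hj, hu j hj]

lemma isBounded_tubeBox_inter_hyperplane (hB : IsSimpleSystem Φ B)
    (hω : IsFundamentalCoweights B ω) :
    Bornology.IsBounded (tubeBox Φ (ω i) x₀ ∩ {y | ⟪ω i, y⟫ = 0}) := by
  refine isBounded_of_isBounded_image_inner (G := fun j => if j = i then ω i else B j)
    (fun y hy => ?_) fun j => ?_
  · have hyω : y = ⟪B i, y⟫ • ω i := eq_inner_smul_coweight hB.indep hω fun j hj => by
      simpa [hj] using hy j
    have hi : ⟪ω i, y⟫ = 0 := by simpa using hy i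
    rw [hyω, real_inner_smul_right, mul_eq_zero, inner_self_eq_zero] at hi
    rcases hi with hi | hi
    · rw [hyω, hi, zero_smul]
    · rw [hyω, hi, smul_zero]
  · by_cases hj : j = i
    · refine (Bornology.isBounded_singleton (x := (0:ℝ))).subset ?_
      rintro _ ⟨y, ⟨-, hy⟩, rfl⟩
      simpa [hj] using hy
    · simp only [hj, if_false]
      exact (isBounded_image_inner_tubeBox (hB.mem j) (by rw [hω, if_neg hj])).subset
        (Set.image_mono Set.inter_subset_left)

lemma IsBarycenter.apply_lt {s : Set (E m)} (hsb : Bornology.IsBounded s) (hsc : Convex ℝ s)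
    (hx : IsBarycenter s x) (ℓ : E m →L[ℝ] ℝ) {c : ℝ} (hℓ : ∀ y ∈ s, ℓ y < c) :
    ℓ x < c := by
  obtain ⟨P, hP, ⟨e, he⟩, rfl⟩ := hx
  have heK : e ∈ Set.extremePoints ℝ (closure s) := hP ▸ Finset.mem_coe.mpr he
  obtain ⟨y, hy⟩ := closure_nonempty_iff.mp ⟨e, extremePoints_subset heK⟩
  refine apply_average_extremePoints_lt hsb.isCompact_closure hsc.closure hP ℓ
    (fun z hz => ?_) ⟨y, subset_closure hy, hℓ y hy⟩
  exact closure_minimal (fun z hz => (hℓ z hz).le) (isClosed_le ℓ.continuous continuous_const) hz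

lemma IsBarycenter.mem_tubeBox (hB : IsSimpleSystem Φ B) (hω : IsFundamentalCoweights B ω)
    (hx : IsBarycenter (tubeBox Φ (ω i) x₀ ∩ {y | ⟪ω i, y⟫ = 0}) x) :
    x ∈ tubeBox Φ (ω i) x₀ := by
  have hsb := isBounded_tubeBox_inter_hyperplane (i := i) (x₀ := x₀) hB hω
  have hsc : Convex ℝ (tubeBox Φ (ω i) x₀ ∩ {y | ⟪ω i, y⟫ = 0}) :=
    convex_tubeBox.inter (convex_hyperplane (innerₛₗ ℝ (ω i)).isLinear 0)
  intro α hα hαβ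
  constructor
  · simpa using hx.apply_lt hsb hsc (-innerSL ℝ α) (c := -⌊⟪α, x₀⟫⌋)
      fun y hy => by simpa using (hy.1 α hα hαβ).1
  · exact hx.apply_lt hsb hsc (innerSL ℝ α) fun y hy => (hy.1 α hα hαβ).2

lemma IsBarycenter.apply_eq_self {s : Set (E m)} (hx : IsBarycenter s x)
    (φ : E m ≃ᵃⁱ[ℝ] E m) (hφ : φ '' s = s) : φ x = x := by
  classical
  obtain ⟨P, hP, hPne, rfl⟩ := hx
  have hcl : φ '' closure s = closure s := by
    simpa [hφ] using φ.toHomeomorph.image_closure s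
  have hφP : P.image φ = P := by
    rw [← Finset.coe_inj, Finset.coe_image, hP]
    simpa [hcl] using φ.toAffineEquiv.image_extremePoints (closure s)
  have hsum : ∑ y ∈ P, φ y = ∑ y ∈ P, y :=
    calc ∑ y ∈ P, φ y = ∑ y ∈ P.image φ, y :=
          (Finset.sum_image (f := id) fun a _ b _ h => φ.injective h).symm
      _ = ∑ y ∈ P, y := by rw [hφP]
  exact (φ.toAffineMap.apply_average hPne).trans (congrArg _ hsum)

lemma IsBarycenter.exists_apply_eq_add_smul (hf : ∀ x, f x = L x + b) (hLβ : L β = β)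
    {T : Set (E m)} (hT : f '' T = T) (hTβ : ∀ y ∈ T, ∀ t : ℝ, y + t • β ∈ T)
    (hx : IsBarycenter (T ∩ {y | ⟪β, y⟫ = 0}) x) : ∃ c : ℝ, f x = x + c • β := by
  -- `φ` cancels the `β`-component of the translation part of `f`, so it preserves every level set
  -- of `⟪β, ·⟫`, and hence the slice; the barycenter is then a fixed point of `φ`.
  set c := ⟪β, b⟫ / ⟪β, β⟫
  let φ : E m ≃ᵃⁱ[ℝ] E m := L.toAffineIsometryEquiv.trans (.constVAdd ℝ (E m) (b - c • β))
  have hφ : ∀ y, φ y = f y - c • β := fun y => by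
    simp only [φ, AffineIsometryEquiv.coe_trans, Function.comp_apply,
      AffineIsometryEquiv.coe_constVAdd, LinearIsometryEquiv.coe_toAffineIsometryEquiv, hf,
      vadd_eq_add]
    abel
  have hβφ : ∀ y, ⟪β, φ y⟫ = ⟪β, y⟫ := fun y => by
    have hc : c * ⟪β, β⟫ = ⟪β, b⟫ :=
      div_mul_cancel_of_imp fun h => by rw [inner_self_eq_zero.mp h, inner_zero_left]
    rw [hφ, sub_eq_add_neg (f y), ← sub_add_cancel (f y) y, add_assoc, inner_add_right,
      inner_add_right, inner_apply_sub_self hf hLβ, inner_neg_right, real_inner_smul_right, hc]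
    ring
  refine ⟨c, ?_⟩
  suffices φ '' (T ∩ {y | ⟪β, y⟫ = 0}) = T ∩ {y | ⟪β, y⟫ = 0} by
    rw [← sub_eq_iff_eq_add, ← hφ, hx.apply_eq_self φ this]
  ext z
  constructor
  · rintro ⟨y, ⟨hyT, hyH⟩, rfl⟩
    refine ⟨?_, (hβφ y).trans hyH⟩
    simpa [hφ, sub_eq_add_neg] using hTβ _ (hT ▸ Set.mem_image_of_mem f hyT) (-c)
  · rintro ⟨hzT, hzH⟩
    obtain ⟨y, hyT, hy⟩ : z + c • β ∈ f '' T := hT.symm ▸ hTβ z hzT c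
    have hφy : φ y = z := by rw [hφ, hy, add_sub_cancel_right]
    exact ⟨y, ⟨hyT, by rw [Set.mem_ofPred_eq, ← hβφ, hφy]; exact hzH⟩, hφy⟩

end Barycenter

/-- For a hyperbolic element `w` of the affine Weyl group, with translation
vector `v_w`, and a geodesic tube `𝒯` of direction `β∨ = ω_i∨` with centerline `ℒ`,
the following are equivalent:
(1) `w(𝒯) = 𝒯`;
(2) `ℒ ⊆ Min(w)` and `v_w` is parallel to `β∨`;
(3) there is a point `y ∈ 𝒯 ∩ Min(w)` contained in some alcove, and `v_w` is parallel
to `β∨`. -/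
theorem tube_stabilizer_tfae {m : ℕ} (Φ : Set (E m)) (hΦ : IsRootSystem Φ)
    (B ω : Fin m → E m) (hB : IsSimpleSystem Φ B) (hω : IsFundamentalCoweights B ω)
    (i : Fin m) (T : Set (E m)) (hT : IsGeodesicTube Φ (ω i) T)
    (x : E m) (hx : IsBarycenter (T ∩ {y : E m | ⟪ω i, y⟫ = (0:ℝ)}) x)
    (w : Equiv.Perm (E m)) (hw : w ∈ Waff Φ) (hhyp : IsHyperbolic (w : E m → E m))
    (v : E m) (hv : HasTransVec (w : E m → E m) v) :
    List.TFAE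
      [ (w : E m → E m) '' T = T,
        centerline x (ω i) ⊆ minSet (w : E m → E m) ∧ ∃ c : ℝ, v = c • ω i,
        (∃ y ∈ T ∩ minSet (w : E m → E m), ∃ C, IsAlcove Φ C ∧ y ∈ C) ∧
          ∃ c : ℝ, v = c • ω i ] := by
  obtain ⟨x₀, hx₀, hT⟩ := hT
  have hbox : T = tubeBox Φ (ω i) x₀ := hT.trans (connectedComponentIn_eq_tubeBox hx₀)
  have hTβ : ∀ y ∈ T, ∀ t : ℝ, y + t • ω i ∈ T := fun y hy t =>
    hbox ▸ add_smul_mem_tubeBox (hbox ▸ hy) t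
  have hxT : x ∈ T := hbox ▸ (hbox ▸ hx).mem_tubeBox hB hω
  obtain ⟨L, b, hwL, hLΦ, hb⟩ := Waff_le_affineSymmetries hΦ hw
  obtain ⟨p, hp⟩ := hhyp.1
  have hv0 : v ≠ 0 := hhyp.transVec_ne_zero hv
  have hLv : L v = v := hv.linear_apply_eq hwL hp
  have hLω : ∀ c : ℝ, v = c • ω i → L (ω i) = ω i := fun c hc => by
    have hc0 : c ≠ 0 := by rintro rfl; exact hv0 (by simpa using hc)
    refine smul_right_injective _ hc0 ?_
    simp only [← map_smul, ← hc, hLv]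
  tfae_have 1 → 2 := by
    intro hwT
    have hvω : v = ⟪B i, v⟫ • ω i := eq_inner_smul_coweight hB.indep hω fun j hj =>
      hv.inner_eq_zero_of_mapsTo (isometry_of_eq_add hwL) hp
        (Set.mapsTo_iff_image_subset.mpr hwT.subset) hxT
        (hbox ▸ isBounded_image_inner_tubeBox (hB.mem j) (by rw [hω, if_neg hj]))
    obtain ⟨c, hc⟩ := hx.exists_apply_eq_add_smul hwL (hLω _ hvω) hwT hTβ
    exact ⟨centerline_subset_minSet hwL (hLω _ hvω) hc, _, hvω⟩
  tfae_have 2 → 3 := by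
    rintro ⟨hℒ, hvω⟩
    obtain ⟨t, ht⟩ := exists_add_smul_notMem_allWalls hΦ.finite
      (tubeBox_subset_compl_tubeWalls (hbox ▸ hxT))
    exact ⟨⟨x + t • ω i, ⟨hTβ x hxT t, hℒ ⟨t, rfl⟩⟩, _, ⟨_, ht, rfl⟩,
      mem_connectedComponentIn ht⟩, hvω⟩
  tfae_have 3 → 1 := by
    rintro ⟨⟨y, ⟨hyT, hymin⟩, -⟩, c, hc⟩
    have hwy : w y ∈ T := by rw [hv y hymin, hc]; exact hTβ y hyT c
    rw [hT] at hyT hwy ⊢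
    rw [connectedComponentIn_eq hyT, image_connectedComponentIn_compl_tubeWalls hwL hLΦ hb
      (hLω c hc) (connectedComponentIn_subset _ _ hyT), ← connectedComponentIn_eq hwy]
    exact connectedComponentIn_eq hyT
  tfae_finish

end
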